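/- arXiv:2209.05238 — 6 statements merged into one kernel-verified Lean document; each statement's English description precedes it below -/
import Mathlib

section
/- Let (H, ≼) be a premon. Every ≼-artinian ≼-non-unit of H is a product of finitely many ≼-irreducibles (of degree 2). -/
variable {H : Type*} [Monoid H]

/-- `u` is a `≼`-unit. -/
def PreUnit (r : H → H → Prop) (u : H) : Prop := r u 1 ∧ r 1 u

/-- strict form of the preorder: `a ≺ b`. -/
def PreLt (r : H → H → Prop) (a b : H) : Prop := r a b ∧ ¬ r b a

/-- the `≼`-height of `x`: the sup in `ℕ∞` of the lengths `n ≥ 1` of chains of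
`≼`-non-units `x = x₁ ≻ x₂ ≻ ⋯ ≻ xₙ`, with `sSup ∅ = 0`. -/
noncomputable def PreHeight (r : H → H → Prop) (x : H) : ℕ∞ :=
  sSup {e : ℕ∞ | ∃ n : ℕ, e = n ∧ 1 ≤ n ∧ ∃ f : ℕ → H, f 0 = x ∧
    (∀ i < n, ¬ PreUnit r (f i)) ∧ ∀ i, i + 1 < n → PreLt r (f (i + 1)) (f i)}

/-- `x` is `≼`-artinian. -/
def PreArtinian (r : H → H → Prop) (x : H) : Prop :=
  ¬ ∃ f : ℕ → H, f 0 = x ∧ ∀ i, PreLt r (f (i + 1)) (f i)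

/-- `a` is a `≼`-quark. -/
def PreQuark (r : H → H → Prop) (a : H) : Prop :=
  ¬ PreUnit r a ∧ ¬ ∃ b, ¬ PreUnit r b ∧ PreLt r b a

/-- `a` is a `≼`-irreducible (of degree 2). -/
def PreIrred (r : H → H → Prop) (a : H) : Prop :=
  ¬ PreUnit r a ∧ ∀ y z : H, ¬ PreUnit r y → ¬ PreUnit r z →
    PreLt r y a → PreLt r z a → a ≠ y * z

/-- `a` is a `≼`-irreducible of degree `s`. -/
def PreIrredDeg (r : H → H → Prop) (s : ℕ) (a : H) : Prop :=
  ¬ PreUnit r a ∧ ∀ l : List H, 2 ≤ l.length → l.length ≤ s →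
    (∀ x ∈ l, ¬ PreUnit r x ∧ PreLt r x a) → a ≠ l.prod

/-- `(H, ≼)` is locally artinian. -/
def LocallyArtinian (r : H → H → Prop) : Prop :=
  ∀ x : H, ¬ PreUnit r x → ∃ l : List H,
    (∀ a ∈ l, ¬ PreUnit r a ∧ PreArtinian r a) ∧ x = l.prod

/-- `H` is `≼`-factorable. -/
def PreFactorable (r : H → H → Prop) : Prop :=
  ∀ x : H, ¬ PreUnit r x → ∃ l : List H, (∀ a ∈ l, PreIrred r a) ∧ x = l.prod

lemma acc_of_preArtinian (r : H → H → Prop) (x : H) (hart : PreArtinian r x) :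
    Acc (PreLt r) x := by
  by_contra hacc
  apply hart
  have key : ∀ a : H, ¬ Acc (PreLt r) a → ∃ b, PreLt r b a ∧ ¬ Acc (PreLt r) b := by
    intro a ha
    by_contra h
    push_neg at h
    exact ha (Acc.intro a h)
  classical
  have g : ∀ a : {a : H // ¬ Acc (PreLt r) a},
      {b : {b : H // ¬ Acc (PreLt r) b} // PreLt r b.1 a.1} := by
    intro a
    have := key a.1 a.2
    exact ⟨⟨this.choose, this.choose_spec.2⟩, this.choose_spec.1⟩
  let F : ℕ → {a : H // ¬ Acc (PreLt r) a} := fun n =>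
    Nat.rec ⟨x, hacc⟩ (fun _ a => (g a).1) n
  refine ⟨fun n => (F n).1, rfl, fun i => ?_⟩
  exact (g (F i)).2

theorem stmt3 (r : H → H → Prop) (hrefl : Reflexive r) (htrans : Transitive r) (x : H)
    (hx : ¬ PreUnit r x) (hart : PreArtinian r x) :
    ∃ l : List H, (∀ a ∈ l, PreIrred r a) ∧ x = l.prod := by
  have hacc := acc_of_preArtinian r x hart
  clear hart
  induction hacc with
  | intro x _ IH =>
    by_cases hirr : PreIrred r x
    · exact ⟨[x], by simp [hirr], by simp⟩
    · unfold PreIrred at hirr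
      push_neg at hirr
      obtain ⟨y, z, hy, hz, hyx, hzx, heq⟩ := hirr hx
      obtain ⟨l1, hl1, hy1⟩ := IH y hyx hy
      obtain ⟨l2, hl2, hz2⟩ := IH z hzx hz
      refine ⟨l1 ++ l2, ?_, ?_⟩
      · intro a ha
        rcases List.mem_append.1 ha with h | h
        exacts [hl1 a h, hl2 a h]
      · rw [List.prod_append, heq, hy1, hz2]
end

section
/- Let (H, ≼) be a premon and s ∈ ℕ with s ≥ 2. Every ≼-artinian ≼-non-unit of H is a product of finitely many ≼-irreducibles of degree s. -/
variable {H : Type*} [Monoid H]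

lemma artinian_acc (r : H → H → Prop) {x : H} (hart : PreArtinian r x) :
    Acc (PreLt r) x := by
  by_contra hacc
  apply hart
  have step : ∀ y : H, ¬ Acc (PreLt r) y → ∃ z, ¬ Acc (PreLt r) z ∧ PreLt r z y := by
    intro y hy
    by_contra h
    push_neg at h
    exact hy (Acc.intro y fun z hz =>
      Classical.byContradiction fun hc => h z hc hz)
  let f : ℕ → {y : H // ¬ Acc (PreLt r) y} := fun n =>
    Nat.rec ⟨x, hacc⟩ (fun _ p => ⟨(step p.1 p.2).choose, (step p.1 p.2).choose_spec.1⟩) n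
  refine ⟨fun n => (f n).1, rfl, fun i => ?_⟩
  exact (step (f i).1 (f i).2).choose_spec.2

theorem stmt4 (r : H → H → Prop) (hrefl : Reflexive r) (htrans : Transitive r)
    (s : ℕ) (hs : 2 ≤ s) (x : H) (hx : ¬ PreUnit r x) (hart : PreArtinian r x) :
    ∃ l : List H, (∀ a ∈ l, PreIrredDeg r s a) ∧ x = l.prod := by
  have key : ∀ m : List H,
      (∀ a ∈ m, ∃ la : List H, (∀ b ∈ la, PreIrredDeg r s b) ∧ a = la.prod) →
      ∃ L : List H, (∀ b ∈ L, PreIrredDeg r s b) ∧ m.prod = L.prod := by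
    intro m
    induction m with
    | nil => exact fun _ => ⟨[], by simp, by simp⟩
    | cons a t iht =>
      intro hm
      obtain ⟨la, hla, hpa⟩ := hm a (by simp)
      obtain ⟨L, hL, hpL⟩ := iht (fun b hb => hm b (by simp [hb]))
      refine ⟨la ++ L, ?_, by simp [List.prod_cons, ← hpa, hpL]⟩
      intro b hb
      rcases List.mem_append.1 hb with h | h
      exacts [hla b h, hL b h]
  have main : ∀ y : H, Acc (PreLt r) y → ¬ PreUnit r y →
      ∃ l : List H, (∀ a ∈ l, PreIrredDeg r s a) ∧ y = l.prod := by
    intro y hacc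
    induction hacc with
    | intro y _ ih =>
      intro hy
      by_cases hirr : PreIrredDeg r s y
      · exact ⟨[y], by simp [hirr], by simp⟩
      · rw [PreIrredDeg] at hirr
        push_neg at hirr
        obtain ⟨l, _, _, hmem, hprod⟩ := hirr hy
        obtain ⟨L, hL, hpL⟩ := key l (fun a ha =>
          ih a (hmem a ha).2 (hmem a ha).1)
        exact ⟨L, hL, by rw [hprod, hpL]⟩
  exact main x (artinian_acc r hart) hx
end

section
/- If (H, ≼) is a locally artinian premon, then every ≼-non-unit of H factors as a finite product of ≼-irreducibles; that is, H is ≼-factorable. -/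
variable {H : Type*} [Monoid H]

/-! Below an artinian element the strict order `≺` is well-founded, so by well-founded induction a
reducible artinian non-unit splits into two strictly smaller non-units, which factor by induction.
Thus artinian non-units lie in the submonoid generated by the irreducibles, and hence so do
their products. -/

theorem preArtinian_iff_acc {α : Type*} {r : α → α → Prop} {x : α} :
    PreArtinian r x ↔ Acc (PreLt r) x :=
  not_iff_comm.mp not_acc_iff_exists_descending_chain

theorem mem_closure_preIrred_of_acc {r : H → H → Prop} {x : H} (hx : Acc (PreLt r) x)
    (hu : ¬ PreUnit r x) : x ∈ Submonoid.closure {a | PreIrred r a} := by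
  induction hx with
  | intro x _ ih =>
    by_cases hirr : PreIrred r x
    · exact Submonoid.subset_closure hirr
    · obtain ⟨y, z, hy, hz, hyx, hzx, rfl⟩ : ∃ y z, ¬ PreUnit r y ∧ ¬ PreUnit r z ∧
          PreLt r y x ∧ PreLt r z x ∧ x = y * z := by
        simpa [PreIrred, hu] using hirr
      exact mul_mem (ih y hyx hy) (ih z hzx hz)

theorem stmt5_general (r : H → H → Prop) (hla : LocallyArtinian r) : PreFactorable r := by
  intro x hx
  obtain ⟨l, hl, rfl⟩ := hla x hx
  have hmem : l.prod ∈ Submonoid.closure {a | PreIrred r a} := list_prod_mem fun a ha ↦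
    mem_closure_preIrred_of_acc (preArtinian_iff_acc.mp (hl a ha).2) (hl a ha).1
  obtain ⟨m, hm, hprod⟩ := Submonoid.exists_list_of_mem_closure hmem
  exact ⟨m, hm, hprod.symm⟩

theorem stmt5 (r : H → H → Prop) (hrefl : Reflexive r) (htrans : Transitive r)
    (hla : LocallyArtinian r) : PreFactorable r :=
  stmt5_general r hla
end

section
/- In an acyclic monoid H, an element a is an atom if and only if it is a ∣_H-irreducible, if and only if it is a ∣_H-quark. -/
variable {H : Type*} [Monoid H]

/-- divisibility preorder: `x ∣_H y` iff `y ∈ HxH`. -/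
def DvdH (x y : H) : Prop := ∃ u v : H, y = u * x * v

/-- principal two-sided ideal `HxH`. -/
def IdealH (x : H) : Set H := {w : H | ∃ u v : H, w = u * x * v}

/-- `u` is a `∣_H`-unit. -/
def DvdUnit (u : H) : Prop := DvdH u 1 ∧ DvdH 1 u

/-- strict divisibility. -/
def DvdLt (a b : H) : Prop := DvdH a b ∧ ¬ DvdH b a

/-- `H` is acyclic. -/
def Acyclic (H : Type*) [Monoid H] : Prop :=
  ∀ u v x : H, u * x * v = x → IsUnit u ∧ IsUnit v

/-- an atom: a non-unit that is not a product of two non-units. -/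
def IsAtom' (a : H) : Prop :=
  ¬ IsUnit a ∧ ∀ y z : H, ¬ IsUnit y → ¬ IsUnit z → a ≠ y * z

/-- `x` satisfies the ACCP (on principal two-sided ideals). -/
def SatisfiesACCP (x : H) : Prop :=
  ¬ ∃ f : ℕ → H, f 0 = x ∧ ∀ i, IdealH (f i) ⊂ IdealH (f (i + 1))

/-- `a` is a `∣_H`-irreducible. -/
def DvdIrred (a : H) : Prop :=
  ¬ DvdUnit a ∧ ∀ y z : H, ¬ DvdUnit y → ¬ DvdUnit z →
    DvdLt y a → DvdLt z a → a ≠ y * z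

/-- `a` is a `∣_H`-quark. -/
def DvdQuark (a : H) : Prop :=
  ¬ DvdUnit a ∧ ¬ ∃ b : H, ¬ DvdUnit b ∧ DvdLt b a

/-- In an acyclic monoid, a one-sided inverse is a genuine inverse. -/
lemma acyclic_unit_of_mul_eq_one (hH : Acyclic H) {z r : H} (h : z * r = 1) :
    IsUnit z ∧ IsUnit r := by
  have he : (r * z) * (r * z) = r * z := by
    have : (r * z) * (r * z) = r * (z * r) * z := by simp [mul_assoc]
    rw [this, h, mul_one]
  have hu : IsUnit (r * z) := by
    have := hH (r * z) 1 (r * z) (by rw [mul_one]; exact he)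
    exact this.1
  have h1 : r * z = 1 := hu.mul_left_cancel (by rw [mul_one]; exact he)
  exact ⟨⟨⟨z, r, h, h1⟩, rfl⟩, ⟨⟨r, z, h1, h⟩, rfl⟩⟩

lemma acyclic_isUnit_mul (hH : Acyclic H) {z t : H} (h : IsUnit (z * t)) :
    IsUnit z ∧ IsUnit t := by
  obtain ⟨w, hw⟩ := h
  have h1 : z * (t * ↑w⁻¹) = 1 := by
    rw [← mul_assoc, ← hw]; exact w.mul_inv
  have h2 : (↑w⁻¹ * z) * t = 1 := by
    rw [mul_assoc, ← hw]; exact w.inv_mul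
  exact ⟨(acyclic_unit_of_mul_eq_one hH h1).1, (acyclic_unit_of_mul_eq_one hH h2).2⟩

lemma dvdUnit_iff (hH : Acyclic H) {u : H} : DvdUnit u ↔ IsUnit u := by
  constructor
  · rintro ⟨⟨s, t, hst⟩, -⟩
    have h1 : (s * u) * t = 1 := by rw [← hst]
    have := (acyclic_unit_of_mul_eq_one hH h1).1
    exact (acyclic_isUnit_mul hH this).2
  · intro hu
    refine ⟨⟨↑hu.unit⁻¹, 1, ?_⟩, ⟨u, 1, by simp⟩⟩
    simp [hu.unit_spec, IsUnit.inv_mul_cancel]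

theorem stmt12 (hH : Acyclic H) (a : H) :
    (IsAtom' a ↔ DvdIrred a) ∧ (DvdIrred a ↔ DvdQuark a) := by
  have atom_quark : IsAtom' a → DvdQuark a := by
    rintro ⟨hna, hprod⟩
    refine ⟨(dvdUnit_iff hH).not.mpr hna, ?_⟩
    rintro ⟨b, hb, ⟨⟨u, v, hab⟩, hnab⟩⟩
    have hbnu : ¬ IsUnit b := (dvdUnit_iff hH).not.mp hb
    by_cases hu : IsUnit u
    · by_cases hv : IsUnit v
      · obtain ⟨U, rfl⟩ := hu
        obtain ⟨V, rfl⟩ := hv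
        exact hnab ⟨↑U⁻¹, ↑V⁻¹, by rw [hab]; simp [mul_assoc]⟩
      · -- a = (u*b) * v, both non-units
        have h1 : ¬ IsUnit (u * b) := fun h => hbnu (acyclic_isUnit_mul hH h).2
        exact hprod (u * b) v h1 hv hab
    · -- a = u * (b*v), both non-units
      have h2 : ¬ IsUnit (b * v) := fun h => hbnu (acyclic_isUnit_mul hH h).1
      exact hprod u (b * v) hu h2 (by rw [hab, mul_assoc])
  have quark_irred : DvdQuark a → DvdIrred a := by
    rintro ⟨h1, h2⟩
    exact ⟨h1, fun y z hy _ hlt _ _ => h2 ⟨y, hy, hlt⟩⟩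
  have irred_atom : DvdIrred a → IsAtom' a := by
    rintro ⟨hna, hirr⟩
    have hna' : ¬ IsUnit a := fun h => hna ((dvdUnit_iff hH).mpr h)
    refine ⟨hna', ?_⟩
    intro y z hy hz hayz
    have hylt : DvdLt y a := by
      refine ⟨⟨1, z, by rw [one_mul, hayz]⟩, ?_⟩
      rintro ⟨s, t, hst⟩
      -- y = s*a*t = s*(y*z)*t = s*y*(z*t)
      have : s * y * (z * t) = y := by
        conv_rhs => rw [hst, hayz]
        simp [mul_assoc]
      have := hH s (z * t) y this
      exact hz (acyclic_isUnit_mul hH this.2).1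
    have hzlt : DvdLt z a := by
      refine ⟨⟨y, 1, by rw [mul_one, hayz]⟩, ?_⟩
      rintro ⟨s, t, hst⟩
      have : (s * y) * z * t = z := by
        conv_rhs => rw [hst, hayz]
        simp [mul_assoc]
      have := hH (s * y) t z this
      exact hy (acyclic_isUnit_mul hH this.1).2
    exact hirr y z ((dvdUnit_iff hH).not.mpr hy) ((dvdUnit_iff hH).not.mpr hz)
      hylt hzlt hayz
  exact ⟨⟨fun h => quark_irred (atom_quark h), irred_atom⟩,
    ⟨fun h => atom_quark (irred_atom h), quark_irred⟩⟩
end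

section
/- Let R be the subring of ℚ[X] consisting of all polynomials with integer constant term, and H its multiplicative monoid of nonzero elements. Then for every nonzero q ∈ ℚ, the element qX of H does not satisfy the ACCP: the sequence qX, (1/2)qX, (1/4)qX, … is strictly decreasing with respect to the divisibility preorder of H. -/
open Polynomial

/-- membership in `H = (ℤ + Xℚ[X]) \ {0}`. -/
def MemH (f : Polynomial ℚ) : Prop := f ≠ 0 ∧ ∃ n : ℤ, f.coeff 0 = (n : ℚ)

/-- divisibility in `H`. -/
def DvdH16 (f g : Polynomial ℚ) : Prop := ∃ h : Polynomial ℚ, MemH h ∧ g = f * h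

lemma dvd_aux {a b : ℚ} (ha : a ≠ 0) {h : Polynomial ℚ}
    (heq : C b * X = C a * X * h) : h = C (b / a) := by
  have h1 : (X : Polynomial ℚ) * (C b - C a * h) = 0 := by ring_nf; linear_combination heq
  have h2 : C b - C a * h = 0 := by
    rcases mul_eq_zero.mp h1 with h | h
    · exact absurd h X_ne_zero
    · exact h
  have h3 : C a * h = C b := (sub_eq_zero.mp h2).symm
  have : C a * h = C a * C (b / a) := by rw [h3, ← C_mul, mul_div_cancel₀ _ ha]
  exact mul_left_cancel₀ (C_ne_zero.mpr ha) this

theorem stmt16 (q : ℚ) (hq : q ≠ 0) :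
    (∀ i : ℕ, DvdH16 (C (q / 2 ^ (i + 1)) * X) (C (q / 2 ^ i) * X) ∧
      ¬ DvdH16 (C (q / 2 ^ i) * X) (C (q / 2 ^ (i + 1)) * X)) ∧
    ¬ ¬ ∃ f : ℕ → Polynomial ℚ, (∀ i, MemH (f i)) ∧ f 0 = C q * X ∧
      ∀ i, DvdH16 (f (i + 1)) (f i) ∧ ¬ DvdH16 (f i) (f (i + 1)) := by
  have key : ∀ i : ℕ, DvdH16 (C (q / 2 ^ (i + 1)) * X) (C (q / 2 ^ i) * X) ∧
      ¬ DvdH16 (C (q / 2 ^ i) * X) (C (q / 2 ^ (i + 1)) * X) := by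
    intro i
    constructor
    · refine ⟨C 2, ⟨?_, 2, by simp⟩, ?_⟩
      · simp
      · rw [mul_assoc, mul_comm X (C 2), ← mul_assoc, ← C_mul]
        congr 1
        field_simp
        ring
    · rintro ⟨h, ⟨hne, n, hn⟩, heq⟩
      have ha : q / 2 ^ i ≠ 0 := by positivity
      rw [dvd_aux ha heq] at hn
      simp only [coeff_C_zero] at hn
      have : q / 2 ^ (i + 1) / (q / 2 ^ i) = 1 / 2 := by
        field_simp
        ring
      rw [this] at hn
      have : (2 : ℚ) * n = 1 := by linarith
      have h2n : (2 * n : ℤ) = 1 := by exact_mod_cast this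
      omega
  refine ⟨key, not_not_intro ⟨fun i => C (q / 2 ^ i) * X, fun i => ⟨?_, 0, by simp⟩, by simp, fun i => key i⟩⟩
  have : q / 2 ^ i ≠ 0 := by positivity
  simp [this, X_ne_zero]
end

section
/- Let r = a/b ∈ ℚ with a, b positive integers, a ≥ 2, gcd(a,b) = 1, and r < 1, and let H be the additive submonoid of ℚ generated by {rⁱ : i ∈ ℕ}. Then for every i ∈ ℕ, arⁱ = (b−a)r^{i+1} + ar^{i+1}, so ar^{i+1} divides arⁱ in H; consequently the sequence a, ar, ar², … is strictly decreasing with respect to the divisibility preorder of H, and hence the element a ∈ H does not satisfy the ACCP. -/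
/-!
Since `b * r = a`, we have `a rⁱ = b r^{i+1} = (b - a) r^{i+1} + a r^{i+1}`, and `(b - a) r^{i+1}` lies
in `H` because `a < b`. So each `a r^{i+1}` divides `a rⁱ`. The converse divisibility fails because
`H` consists of nonnegative numbers while `a r^{i+1} < a rⁱ`. Hence `(a rⁱ)ᵢ` is a strictly
descending divisor chain starting at `a`.
-/

theorem mul_div_pow_eq_sub_mul_add_mul {K : Type*} [Field K] {a b : K} (hb : b ≠ 0) (i : ℕ) :
    a * (a / b) ^ i = (b - a) * (a / b) ^ (i + 1) + a * (a / b) ^ (i + 1) := by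
  rw [pow_succ]
  field_simp
  ring

section PowersClosure

variable {R : Type*} [Semiring R]

theorem natCast_mul_pow_mem_closure (r : R) (n i : ℕ) :
    (n : R) * r ^ i ∈ AddSubmonoid.closure {x : R | ∃ j : ℕ, x = r ^ j} := by
  rw [← nsmul_eq_mul]
  exact AddSubmonoid.nsmul_mem _ (AddSubmonoid.subset_closure (Set.mem_ofPred.mpr ⟨i, rfl⟩)) n

theorem closure_pow_le_nonneg [PartialOrder R] [IsOrderedRing R] {r : R} (hr : 0 ≤ r) :
    AddSubmonoid.closure {x : R | ∃ j : ℕ, x = r ^ j} ≤ AddSubmonoid.nonneg R :=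
  AddSubmonoid.closure_le.mpr <| by
    rintro _ ⟨j, rfl⟩
    exact pow_nonneg hr j

end PowersClosure

theorem not_exists_nonneg_add_eq_of_lt {α : Type*} [AddZeroClass α] [Preorder α] [AddLeftMono α]
    {H : Set α} (hH : ∀ h ∈ H, 0 ≤ h) {x y : α} (hyx : y < x) : ¬ ∃ h ∈ H, y = x + h := by
  rintro ⟨h, hh, rfl⟩
  exact (le_add_of_nonneg_right (hH h hh)).not_gt hyx

theorem stmt17_general (a b : ℕ) (ha : 2 ≤ a) (hb : 0 < b)
    (hr : (a : ℚ) / b < 1) :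
    let r : ℚ := (a : ℚ) / b
    let H : AddSubmonoid ℚ := AddSubmonoid.closure {x : ℚ | ∃ i : ℕ, x = r ^ i}
    let dvdH : ℚ → ℚ → Prop := fun x y => ∃ h ∈ H, y = x + h
    (∀ i : ℕ, (a : ℚ) * r ^ i = ((b : ℚ) - a) * r ^ (i + 1) + a * r ^ (i + 1)) ∧
    (∀ i : ℕ, dvdH ((a : ℚ) * r ^ (i + 1)) ((a : ℚ) * r ^ i) ∧
      ¬ dvdH ((a : ℚ) * r ^ i) ((a : ℚ) * r ^ (i + 1))) ∧
    ¬ ¬ ∃ f : ℕ → ℚ, (∀ i, f i ∈ H) ∧ f 0 = (a : ℚ) ∧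
      ∀ i, dvdH (f (i + 1)) (f i) ∧ ¬ dvdH (f i) (f (i + 1)) := by
  intro r H dvdH
  have ha0 : (0 : ℚ) < a := by exact_mod_cast (show 0 < a by omega)
  have hb0 : (0 : ℚ) < b := by exact_mod_cast hb
  have hr0 : 0 < r := div_pos ha0 hb0
  have hab : a ≤ b := by exact_mod_cast ((div_lt_one hb0).mp hr).le
  have split := mul_div_pow_eq_sub_mul_add_mul (K := ℚ) (a := a) hb0.ne'
  have step (i : ℕ) : dvdH ((a : ℚ) * r ^ (i + 1)) ((a : ℚ) * r ^ i) ∧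
      ¬ dvdH ((a : ℚ) * r ^ i) ((a : ℚ) * r ^ (i + 1)) := by
    refine ⟨⟨((b - a : ℕ) : ℚ) * r ^ (i + 1), natCast_mul_pow_mem_closure r _ _, ?_⟩, ?_⟩
    · rw [Nat.cast_sub hab, split i, add_comm]
    · exact not_exists_nonneg_add_eq_of_lt (fun h hh => closure_pow_le_nonneg hr0.le hh)
        (mul_lt_mul_of_pos_left (pow_lt_pow_right_of_lt_one₀ hr0 hr i.lt_succ_self) ha0)
  refine ⟨split, step, fun hno => hno ⟨fun i => (a : ℚ) * r ^ i,
    fun i => natCast_mul_pow_mem_closure r a i, by simp, step⟩⟩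

theorem stmt17 (a b : ℕ) (ha : 2 ≤ a) (hb : 0 < b) (hab : Nat.gcd a b = 1)
    (hr : (a : ℚ) / b < 1) :
    let r : ℚ := (a : ℚ) / b
    let H : AddSubmonoid ℚ := AddSubmonoid.closure {x : ℚ | ∃ i : ℕ, x = r ^ i}
    let dvdH : ℚ → ℚ → Prop := fun x y => ∃ h ∈ H, y = x + h
    (∀ i : ℕ, (a : ℚ) * r ^ i = ((b : ℚ) - a) * r ^ (i + 1) + a * r ^ (i + 1)) ∧
    (∀ i : ℕ, dvdH ((a : ℚ) * r ^ (i + 1)) ((a : ℚ) * r ^ i) ∧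
      ¬ dvdH ((a : ℚ) * r ^ i) ((a : ℚ) * r ^ (i + 1))) ∧
    ¬ ¬ ∃ f : ℕ → ℚ, (∀ i, f i ∈ H) ∧ f 0 = (a : ℚ) ∧
      ∀ i, dvdH (f (i + 1)) (f i) ∧ ¬ dvdH (f i) (f (i + 1)) :=
  stmt17_general a b ha hb hr
end
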